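/- Let T > 0 and let f, g : (0,T) → ℝ be measurable. Define J(t) = ∫_{t/2}^t (t−τ)^{-1/2} |f(τ)| |g(τ)| dτ. Then for any σ ≥ 0, ∫₀ᵀ √t · |ln(t/(e·T))|^σ · J(t) dt/t ≤ C · (sup_{0<τ<T} √τ·|f(τ)|) · ∫₀ᵀ √τ · |ln(τ/(e·T))|^σ · |g(τ)| dτ/τ for an absolute constant C. -/

import Mathlib

/-!
The weight `w t = √t |log (t / (e T))|^σ / t = |log (t / (e T))|^σ / √t` is antitone on `(0, T]`,
so on the region `t / 2 < τ < t` it may be replaced by `w τ`. Exchanging the order of integration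
(Tonelli), the `t`-integral of the kernel is `∫_τ^{2τ} (t - τ)^{-1/2} dt = 2√τ`, and
`2√τ |f τ| ≤ 2 ess sup √τ |f|`; so `C = 2` works.
-/

open MeasureTheory Set
open scoped ENNReal

theorem essSup_nonneg_of_nonneg {α : Type*} [MeasurableSpace α] {μ : Measure α} [NeZero μ]
    {f : α → ℝ} (hf0 : 0 ≤ f) (hf : Filter.IsBoundedUnder (· ≤ ·) (ae μ) f) : 0 ≤ essSup f μ := by
  obtain ⟨x, hx⟩ := (ae_le_essSup hf).exists
  exact (hf0 x).trans hx

theorem ofReal_integral_le_lintegral_ofReal {α : Type*} [MeasurableSpace α] {μ : Measure α}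
    (f : α → ℝ) : ENNReal.ofReal (∫ x, f x ∂μ) ≤ ∫⁻ x, ENNReal.ofReal (f x) ∂μ := by
  by_cases hf : Integrable f μ
  · calc ENNReal.ofReal (∫ x, f x ∂μ) ≤ ENNReal.ofReal (∫ x, max (f x) 0 ∂μ) :=
          ENNReal.ofReal_le_ofReal (integral_mono hf hf.pos_part fun x => le_max_left _ _)
      _ = ∫⁻ x, ENNReal.ofReal (f x) ∂μ := by
          rw [ofReal_integral_eq_lintegral_ofReal hf.pos_part
            (Filter.Eventually.of_forall fun x => le_max_right _ _)]
          simp only [ENNReal.ofReal_max, ENNReal.ofReal_zero, max_zero]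
  · simp [integral_undef hf]

theorem lintegral_Ioo_rpow {r a : ℝ} (hr : -1 < r) (ha : 0 ≤ a) :
    ∫⁻ s in Ioo 0 a, ENNReal.ofReal (s ^ r) = ENNReal.ofReal (a ^ (r + 1) / (r + 1)) := by
  have hint : IntegrableOn (fun s : ℝ => s ^ r) (Ioc 0 a) :=
    (intervalIntegrable_iff_integrableOn_Ioc_of_le ha).1
      (intervalIntegral.intervalIntegrable_rpow' hr)
  rw [← ofReal_integral_eq_lintegral_ofReal (hint.mono_set Ioo_subset_Ioc_self)
    ((ae_restrict_of_forall_mem measurableSet_Ioo) fun s hs => Real.rpow_nonneg hs.1.le r),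
    ← integral_Ioc_eq_integral_Ioo, ← intervalIntegral.integral_of_le ha,
    integral_rpow (Or.inl hr), Real.zero_rpow (by linarith), sub_zero]

theorem rpow_neg_half_add_one_div (τ : ℝ) :
    τ ^ (-(1 : ℝ) / 2 + 1) / (-(1 : ℝ) / 2 + 1) = 2 * Real.sqrt τ := by
  rw [show -(1 : ℝ) / 2 + 1 = 1 / 2 by norm_num, ← Real.sqrt_eq_rpow]
  ring

noncomputable def logWeight (c σ t : ℝ) : ℝ :=
  Real.sqrt t * |Real.log (t / c)| ^ σ / t

theorem measurable_logWeight (c σ : ℝ) : Measurable (logWeight c σ) := by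
  unfold logWeight
  fun_prop

theorem logWeight_nonneg (c σ : ℝ) {t : ℝ} (ht : 0 ≤ t) : 0 ≤ logWeight c σ t := by
  unfold logWeight
  positivity

theorem antitoneOn_logWeight {c σ : ℝ} (hσ : 0 ≤ σ) : AntitoneOn (logWeight c σ) (Ioc 0 c) := by
  intro τ hτ t ht hτt
  have hc : 0 < c := hτ.1.trans_le hτ.2
  have hτc : 0 < τ / c := div_pos hτ.1 hc
  have hτt' : τ / c ≤ t / c := by gcongr
  have hlog : |Real.log (t / c)| ≤ |Real.log (τ / c)| := by
    have hlogt : Real.log (t / c) ≤ 0 :=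
      Real.log_nonpos (hτc.le.trans hτt') ((div_le_one hc).2 ht.2)
    have hlogτ : Real.log (τ / c) ≤ Real.log (t / c) := Real.log_le_log hτc hτt'
    rw [abs_of_nonpos hlogt, abs_of_nonpos (hlogτ.trans hlogt)]
    exact neg_le_neg hlogτ
  simp only [logWeight, mul_div_right_comm, Real.sqrt_div_self', one_div_mul_eq_div]
  exact div_le_div₀ (by positivity) (Real.rpow_le_rpow (abs_nonneg _) hlog hσ)
    (Real.sqrt_pos.2 hτ.1) (Real.sqrt_le_sqrt hτt)

section HalfIntervalKernel

variable {T : ℝ} {w h k : ℝ → ℝ≥0∞}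

theorem indicator_Ioo_half_le (hw : AntitoneOn w (Ioo 0 T)) {t τ : ℝ} (ht : t ∈ Ioo 0 T) :
    (Ioo (t / 2) t).indicator (fun τ => w t * (k (t - τ) * h τ)) τ ≤
      (Ioo 0 T).indicator (fun τ => w τ * h τ) τ * (Ioo 0 τ).indicator k (t - τ) := by
  by_cases hτ : τ ∈ Ioo (t / 2) t
  · have hτT : τ ∈ Ioo 0 T := ⟨by linarith [ht.1, hτ.1], hτ.2.trans ht.2⟩
    have hs : t - τ ∈ Ioo 0 τ := ⟨by linarith [hτ.2], by linarith [hτ.1]⟩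
    rw [indicator_of_mem hτ, indicator_of_mem hτT, indicator_of_mem hs, mul_comm (k _),
      ← mul_assoc]
    gcongr
    exact hw hτT ht hτ.2.le
  · rw [indicator_of_notMem hτ]
    exact zero_le

theorem lintegral_mul_lintegral_Ioo_half_le (hw : AntitoneOn w (Ioo 0 T)) (hwm : Measurable w)
    (hhm : Measurable h) (hkm : Measurable k) :
    ∫⁻ t in Ioo 0 T, w t * ∫⁻ τ in Ioo (t / 2) t, k (t - τ) * h τ ≤
      ∫⁻ τ in Ioo 0 T, w τ * h τ * ∫⁻ s in Ioo 0 τ, k s := by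
  set F : ℝ → ℝ → ℝ≥0∞ := fun t τ => (Ioo (t / 2) t).indicator (fun τ => w t * (k (t - τ) * h τ)) τ
  have hF : Measurable (Function.uncurry F) := by
    have hset : MeasurableSet {p : ℝ × ℝ | p.1 / 2 < p.2 ∧ p.2 < p.1} :=
      (measurableSet_lt (by fun_prop) measurable_snd).inter
        (measurableSet_lt measurable_snd measurable_fst)
    exact (Measurable.indicator (by fun_prop) hset :
      Measurable ({p : ℝ × ℝ | p.1 / 2 < p.2 ∧ p.2 < p.1}.indicator
        fun p => w p.1 * (k (p.1 - p.2) * h p.2)))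
  have hinner : ∀ τ, ∫⁻ t in Ioo 0 T, F t τ ≤
      (Ioo 0 T).indicator (fun τ => w τ * h τ) τ * ∫⁻ s in Ioo 0 τ, k s := fun τ =>
    calc ∫⁻ t in Ioo 0 T, F t τ
        ≤ ∫⁻ t in Ioo 0 T, (Ioo 0 T).indicator (fun τ => w τ * h τ) τ *
            (Ioo 0 τ).indicator k (t - τ) :=
          setLIntegral_mono' measurableSet_Ioo fun t ht => indicator_Ioo_half_le hw ht
      _ ≤ ∫⁻ t, (Ioo 0 T).indicator (fun τ => w τ * h τ) τ * (Ioo 0 τ).indicator k (t - τ) :=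
          setLIntegral_le_lintegral _ _
      _ = (Ioo 0 T).indicator (fun τ => w τ * h τ) τ * ∫⁻ s in Ioo 0 τ, k s := by
          have hkτ : Measurable fun t => (Ioo 0 τ).indicator k (t - τ) :=
            (hkm.indicator measurableSet_Ioo).comp (measurable_sub_const τ)
          rw [lintegral_const_mul _ hkτ,
            lintegral_sub_right_eq_self (fun s => (Ioo 0 τ).indicator k s) τ,
            lintegral_indicator measurableSet_Ioo]
  calc ∫⁻ t in Ioo 0 T, w t * ∫⁻ τ in Ioo (t / 2) t, k (t - τ) * h τ
      = ∫⁻ t in Ioo 0 T, ∫⁻ τ, F t τ := by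
        refine lintegral_congr fun t => ?_
        rw [lintegral_indicator measurableSet_Ioo, lintegral_const_mul _ (by fun_prop)]
    _ = ∫⁻ τ, ∫⁻ t in Ioo 0 T, F t τ := lintegral_lintegral_swap hF.aemeasurable
    _ ≤ ∫⁻ τ, (Ioo 0 T).indicator (fun τ => w τ * h τ) τ * ∫⁻ s in Ioo 0 τ, k s :=
        lintegral_mono hinner
    _ = ∫⁻ τ in Ioo 0 T, w τ * h τ * ∫⁻ s in Ioo 0 τ, k s := by
        rw [← lintegral_indicator measurableSet_Ioo]
        exact lintegral_congr fun τ => (indicator_mul_left _ _ (fun τ => ∫⁻ s in Ioo 0 τ, k s)).symm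

end HalfIntervalKernel

theorem ofReal_setIntegral_mul_setIntegral_Ioo_half_le {T r : ℝ} (hr : -1 < r) {w u : ℝ → ℝ}
    (hw : AntitoneOn w (Ioo 0 T)) (hw0 : ∀ t ∈ Ioo 0 T, 0 ≤ w t) (hwm : Measurable w)
    (hu0 : ∀ τ, 0 ≤ u τ) (hum : Measurable u) :
    ENNReal.ofReal (∫ t in Ioo 0 T, w t * ∫ τ in Ioo (t / 2) t, (t - τ) ^ r * u τ) ≤
      ∫⁻ τ in Ioo 0 T, ENNReal.ofReal (w τ * u τ * (τ ^ (r + 1) / (r + 1))) := by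
  calc ENNReal.ofReal (∫ t in Ioo 0 T, w t * ∫ τ in Ioo (t / 2) t, (t - τ) ^ r * u τ)
      ≤ ∫⁻ t in Ioo 0 T, ENNReal.ofReal (w t * ∫ τ in Ioo (t / 2) t, (t - τ) ^ r * u τ) :=
        ofReal_integral_le_lintegral_ofReal _
    _ ≤ ∫⁻ t in Ioo 0 T, ENNReal.ofReal (w t) *
          ∫⁻ τ in Ioo (t / 2) t, ENNReal.ofReal ((t - τ) ^ r) * ENNReal.ofReal (u τ) := by
        refine setLIntegral_mono' measurableSet_Ioo fun t ht => ?_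
        rw [ENNReal.ofReal_mul (hw0 t ht)]
        gcongr
        simp_rw [← ENNReal.ofReal_mul' (hu0 _)]
        exact ofReal_integral_le_lintegral_ofReal _
    _ ≤ ∫⁻ τ in Ioo 0 T, ENNReal.ofReal (w τ) * ENNReal.ofReal (u τ) *
          ∫⁻ s in Ioo 0 τ, ENNReal.ofReal (s ^ r) :=
        lintegral_mul_lintegral_Ioo_half_le (ENNReal.ofReal_mono.comp_antitoneOn hw)
          (by fun_prop) (by fun_prop) (by fun_prop)
    _ = ∫⁻ τ in Ioo 0 T, ENNReal.ofReal (w τ * u τ * (τ ^ (r + 1) / (r + 1))) := by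
        refine setLIntegral_congr_fun measurableSet_Ioo fun τ hτ => ?_
        rw [lintegral_Ioo_rpow hr hτ.1.le, ENNReal.ofReal_mul (mul_nonneg (hw0 τ hτ) (hu0 τ)),
          ENNReal.ofReal_mul (hw0 τ hτ)]

theorem setIntegral_logWeight_mul_le {T c σ A : ℝ} (hTc : T ≤ c) (hσ : 0 ≤ σ) {f g : ℝ → ℝ}
    (hf : Measurable f) (hg : Measurable g)
    (hfA : ∀ᵐ τ ∂volume.restrict (Ioo 0 T), Real.sqrt τ * |f τ| ≤ A) (hA : 0 ≤ A)
    (hint : IntegrableOn (fun τ => logWeight c σ τ * |g τ|) (Ioo 0 T)) :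
    ∫ t in Ioo 0 T,
        logWeight c σ t * ∫ τ in Ioo (t / 2) t, (t - τ) ^ (-(1 : ℝ) / 2) * (|f τ| * |g τ|) ≤
      2 * A * ∫ τ in Ioo 0 T, logWeight c σ τ * |g τ| := by
  have hw0 : ∀ t ∈ Ioo 0 T, 0 ≤ logWeight c σ t := fun t ht => logWeight_nonneg _ _ ht.1.le
  have hwg0 : ∀ τ ∈ Ioo 0 T, 0 ≤ logWeight c σ τ * |g τ| :=
    fun τ hτ => mul_nonneg (hw0 τ hτ) (abs_nonneg _)
  have hw : AntitoneOn (logWeight c σ) (Ioo 0 T) :=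
    (antitoneOn_logWeight hσ).mono fun t ht => ⟨ht.1, ht.2.le.trans hTc⟩
  have hI : 0 ≤ ∫ τ in Ioo 0 T, logWeight c σ τ * |g τ| := setIntegral_nonneg measurableSet_Ioo hwg0
  rw [← ENNReal.ofReal_le_ofReal_iff (by positivity)]
  calc _ ≤ _ := ofReal_setIntegral_mul_setIntegral_Ioo_half_le (by norm_num) hw hw0
          (measurable_logWeight _ _) (fun τ => by positivity) (by fun_prop)
    _ ≤ ∫⁻ τ in Ioo 0 T, ENNReal.ofReal (2 * A) * ENNReal.ofReal (logWeight c σ τ * |g τ|) := by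
        refine lintegral_mono_ae ?_
        filter_upwards [hfA, ae_restrict_mem measurableSet_Ioo] with τ hτA hτ
        rw [rpow_neg_half_add_one_div, ← ENNReal.ofReal_mul (by positivity)]
        refine ENNReal.ofReal_le_ofReal ?_
        calc _ = 2 * (Real.sqrt τ * |f τ|) * (logWeight c σ τ * |g τ|) := by ring
          _ ≤ _ := by gcongr; exact hwg0 τ hτ
    _ = _ := by
        rw [lintegral_const_mul' _ _ ENNReal.ofReal_ne_top,
          ← ofReal_integral_eq_lintegral_ofReal hint
            (ae_restrict_of_forall_mem measurableSet_Ioo hwg0),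
          ← ENNReal.ofReal_mul (by positivity)]

theorem stmt_11 :
    ∃ C : ℝ, 0 < C ∧ ∀ T : ℝ, 0 < T → ∀ σ : ℝ, 0 ≤ σ → ∀ f g : ℝ → ℝ,
      Measurable f → Measurable g →
      (∃ M : ℝ, ∀ᵐ τ ∂(volume.restrict (Ioo 0 T)), Real.sqrt τ * |f τ| ≤ M) →
      IntegrableOn (fun τ => Real.sqrt τ * |Real.log (τ / (Real.exp 1 * T))| ^ σ * |g τ| / τ)
        (Ioo 0 T) →
      (∫ t in Ioo 0 T, Real.sqrt t * |Real.log (t / (Real.exp 1 * T))| ^ σ *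
          (∫ τ in Ioo (t / 2) t, (t - τ) ^ (-(1 : ℝ) / 2) * |f τ| * |g τ|) / t)
        ≤ C * essSup (fun τ => Real.sqrt τ * |f τ|) (volume.restrict (Ioo 0 T)) *
            ∫ τ in Ioo 0 T,
              Real.sqrt τ * |Real.log (τ / (Real.exp 1 * T))| ^ σ * |g τ| / τ := by
  refine ⟨2, two_pos, fun T hT σ hσ f g hf hg ⟨M, hM⟩ hint => ?_⟩
  have hweight : ∀ t x, Real.sqrt t * |Real.log (t / (Real.exp 1 * T))| ^ σ * x / t =
      logWeight (Real.exp 1 * T) σ t * x := fun _ _ => mul_div_right_comm _ _ _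
  have hkernel : ∀ t τ, (t - τ) ^ (-(1 : ℝ) / 2) * |f τ| * |g τ| =
      (t - τ) ^ (-(1 : ℝ) / 2) * (|f τ| * |g τ|) := fun _ _ => mul_assoc _ _ _
  simp only [hweight, hkernel] at hint ⊢
  have : NeZero (volume.restrict (Ioo 0 T)) := ⟨by simp [hT]⟩
  exact setIntegral_logWeight_mul_le (le_mul_of_one_le_left hT.le (Real.one_le_exp zero_le_one))
    hσ hf hg (ae_le_essSup ⟨M, hM⟩) (essSup_nonneg_of_nonneg (fun τ => by positivity) ⟨M, hM⟩) hint
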